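/- The gradient rescaling factor at the target index equals the ratio of summed gradients over all non-target indices: (1-α) + α·(P_θ(y_j) - P_φ(y_j))/(P_θ(y_j)-1) = (∑_{i≠j} ∂L_kd/∂z_i)/(∑_{i≠j} ∂L_ce/∂z_i). -/

import Mathlib

open Finset

section
variable {ι : Type*} [Fintype ι] [DecidableEq ι]

lemma sum_erase_eq_one_sub {p : ι → ℝ} (hp : ∑ i, p i = 1) (j : ι) :
    ∑ i ∈ univ.erase j, p i = 1 - p j := by
  rw [sum_erase_eq_sub (mem_univ j), hp]

lemma sum_erase_sub_ite_eq_one_sub {p y : ι → ℝ} (hp : ∑ i, p i = 1) {j : ι}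
    (hy : ∀ k, y k = if k = j then 1 else 0) :
    ∑ i ∈ univ.erase j, (p i - y i) = 1 - p j := by
  have hy_zero : ∀ i ∈ univ.erase j, y i = 0 := fun i hi ↦ by
    rw [hy i, if_neg (ne_of_mem_erase hi)]
  rw [sum_sub_distrib, sum_eq_zero hy_zero, sum_erase_eq_one_sub hp, sub_zero]

lemma sum_erase_lerp_sub_ite_eq {p q y : ι → ℝ} (hp : ∑ i, p i = 1) (hq : ∑ i, q i = 1) {j : ι}
    (hy : ∀ k, y k = if k = j then 1 else 0) (α : ℝ) :
    ∑ i ∈ univ.erase j, ((1 - α) * (p i - y i) + α * (p i - q i))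
      = (1 - α) * (1 - p j) + α * (q j - p j) := by
  rw [sum_add_distrib, ← mul_sum, ← mul_sum, sum_erase_sub_ite_eq_one_sub hp hy,
    sum_sub_distrib, sum_erase_eq_one_sub hp, sum_erase_eq_one_sub hq]
  ring

end

theorem stmt_9_general (C : ℕ) (Pθ Pφ : Fin C → ℝ)
    (hPθ : ∑ i, Pθ i = 1) (hPφ : ∑ i, Pφ i = 1)
    (j : Fin C) (hj : Pθ j < 1) (α : ℝ)
    (y : Fin C → ℝ) (hy : ∀ k, y k = if k = j then 1 else 0) :
    (1 - α) + α * (Pθ j - Pφ j) / (Pθ j - 1)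
      = (∑ i ∈ Finset.univ.erase j,
            ((1 - α) * (Pθ i - y i) + α * (Pθ i - Pφ i)))
        / (∑ i ∈ Finset.univ.erase j, (Pθ i - y i)) := by
  rw [sum_erase_lerp_sub_ite_eq hPθ hPφ hy, sum_erase_sub_ite_eq_one_sub hPθ hy]
  have h₁ : Pθ j - 1 ≠ 0 := by linarith
  have h₂ : 1 - Pθ j ≠ 0 := by linarith
  field_simp
  ring

/-- The gradient rescaling factor at the target index equals the ratio of
summed gradients over all non-target indices. -/
theorem stmt_9 (C : ℕ) (Pθ Pφ : Fin C → ℝ)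
    (hPθ : ∑ i, Pθ i = 1) (hPφ : ∑ i, Pφ i = 1)
    (j : Fin C) (hj : Pθ j < 1) (α : ℝ) (hα0 : 0 ≤ α) (hα1 : α ≤ 1)
    (y : Fin C → ℝ) (hy : ∀ k, y k = if k = j then 1 else 0) :
    (1 - α) + α * (Pθ j - Pφ j) / (Pθ j - 1)
      = (∑ i ∈ Finset.univ.erase j,
            ((1 - α) * (Pθ i - y i) + α * (Pθ i - Pφ i)))
        / (∑ i ∈ Finset.univ.erase j, (Pθ i - y i)) :=
  stmt_9_general C Pθ Pφ hPθ hPφ j hj α y hy
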